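/- arXiv:1905.05582 — 10 statements merged into one kernel-verified Lean document; each statement's English description precedes it below -/
import Mathlib

section
/- If M is a dominating induced matching of G, then every odd cycle of G (cycle of odd length at least 3, not necessarily induced) contains at least one edge of M. -/
/-- `M` is a dominating induced matching of `G`: `M ⊆ E(G)` and every edge of `G`
intersects (shares a vertex with) exactly one edge of `M`. -/
def IsDIM {V : Type*} (G : SimpleGraph V) (M : Set (Sym2 V)) : Prop :=
  M ⊆ G.edgeSet ∧ ∀ e ∈ G.edgeSet, ∃! f, f ∈ M ∧ ∃ v, v ∈ e ∧ v ∈ f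

private lemma dim_alt_edge {V : Type*} {G : SimpleGraph V} {M : Set (Sym2 V)}
    (hM : IsDIM G M) {u w : V} (h : G.Adj u w) (hne : s(u, w) ∉ M) :
    ((∃ f ∈ M, u ∈ f) ↔ ¬ (∃ f ∈ M, w ∈ f)) := by
  obtain ⟨hsub, huniq⟩ := hM
  obtain ⟨f, ⟨hfM, x, hxe, hxf⟩, hfu⟩ := huniq s(u, w) (G.mem_edgeSet.mpr h)
  constructor
  · rintro ⟨g, hgM, hug⟩ ⟨g', hg'M, hwg'⟩
    have h1 : g = f := hfu g ⟨hgM, u, by simp, hug⟩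
    have h2 : g' = f := hfu g' ⟨hg'M, w, by simp, hwg'⟩
    have : f = s(u, w) := (Sym2.mem_and_mem_iff h.ne).mp ⟨h1 ▸ hug, h2 ▸ hwg'⟩
    exact hne (this ▸ hfM)
  · intro hnw
    refine ⟨f, hfM, ?_⟩
    rcases Sym2.mem_iff.mp hxe with rfl | rfl
    · exact hxf
    · exact absurd ⟨f, hfM, hxf⟩ hnw

private lemma dim_alt_walk {V : Type*} {G : SimpleGraph V} {M : Set (Sym2 V)}
    (hM : IsDIM G M) {u w : V} (p : G.Walk u w) (h : ∀ e ∈ p.edges, e ∉ M) :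
    (((∃ f ∈ M, u ∈ f) ↔ (∃ f ∈ M, w ∈ f)) ↔ Even p.length) := by
  induction p with
  | nil => simp
  | cons hadj q ih =>
    rename_i a b c
    have he : s(a, b) ∉ M := h _ (by simp)
    have h1 := dim_alt_edge hM hadj he
    have h2 := ih (fun e he2 => h e (by simp [he2]))
    simp only [SimpleGraph.Walk.length_cons, Nat.even_add_one]
    have key : ∀ (P Q R E : Prop), (P ↔ ¬Q) → ((Q ↔ R) ↔ E) → ((P ↔ R) ↔ ¬E) := by
      intro P Q R E hPQ hQR
      by_cases hQ : Q <;> by_cases hR : R <;> simp_all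
    exact key _ _ _ _ h1 h2

theorem stmt_3 {V : Type*} [Fintype V] (G : SimpleGraph V) (M : Set (Sym2 V))
    (hM : IsDIM G M) (v : V) (c : G.Walk v v) (hc : c.IsCycle)
    (hodd : Odd c.length) :
    ∃ e ∈ c.edges, e ∈ M := by
  by_contra hcon
  push_neg at hcon
  have := (dim_alt_walk hM c hcon).mp Iff.rfl
  exact (Nat.not_even_iff_odd.mpr hodd) this
end

section
/- If M is a dominating induced matching of G, then every induced cycle C_5 of G contains exactly one edge of M. -/
theorem stmt_5 {V : Type*} [Fintype V] (G : SimpleGraph V) (M : Set (Sym2 V))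
    (hM : IsDIM G M) (v0 v1 v2 v3 v4 : V)
    (h02 : v0 ≠ v2) (h03 : v0 ≠ v3) (h13 : v1 ≠ v3) (h14 : v1 ≠ v4) (h24 : v2 ≠ v4)
    (h01 : G.Adj v0 v1) (h12 : G.Adj v1 v2) (h23 : G.Adj v2 v3)
    (h34 : G.Adj v3 v4) (h40 : G.Adj v4 v0)
    (n02 : ¬ G.Adj v0 v2) (n03 : ¬ G.Adj v0 v3) (n13 : ¬ G.Adj v1 v3)
    (n14 : ¬ G.Adj v1 v4) (n24 : ¬ G.Adj v2 v4) :
    ∃! e, e ∈ ({s(v0, v1), s(v1, v2), s(v2, v3), s(v3, v4), s(v4, v0)} : Set (Sym2 V))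
      ∧ e ∈ M := by
  classical
  obtain ⟨hMsub, hdom⟩ := hM
  have uniq : ∀ a b : V, G.Adj a b → ∀ f1 f2, f1 ∈ M → f2 ∈ M →
      (∃ v, v ∈ s(a,b) ∧ v ∈ f1) → (∃ v, v ∈ s(a,b) ∧ v ∈ f2) → f1 = f2 := by
    intro a b hab f1 f2 h1 h2 w1 w2
    obtain ⟨f, hf, hu⟩ := hdom s(a,b) (G.mem_edgeSet.mpr hab)
    exact (hu f1 ⟨h1, w1⟩).trans (hu f2 ⟨h2, w2⟩).symm
  have covA : ∀ a b : V, G.Adj a b → s(a,b) ∉ M →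
      ¬ ((∃ f ∈ M, a ∈ f) ∧ (∃ f ∈ M, b ∈ f)) := by
    rintro a b hab hnm ⟨⟨f1, h1, hv1⟩, ⟨f2, h2, hv2⟩⟩
    have hef : f1 = f2 := uniq a b hab f1 f2 h1 h2 ⟨a, by simp, hv1⟩ ⟨b, by simp, hv2⟩
    subst hef
    have : f1 = s(a,b) := (Sym2.mem_and_mem_iff hab.ne).mp ⟨hv1, hv2⟩
    exact hnm (this ▸ h1)
  have covB : ∀ a b : V, G.Adj a b → (∃ f ∈ M, a ∈ f) ∨ (∃ f ∈ M, b ∈ f) := by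
    intro a b hab
    obtain ⟨f, ⟨hf, v, hv, hvf⟩, -⟩ := hdom s(a,b) (G.mem_edgeSet.mpr hab)
    rcases Sym2.mem_iff.mp hv with rfl | rfl
    · exact Or.inl ⟨f, hf, hvf⟩
    · exact Or.inr ⟨f, hf, hvf⟩
  have hex : ∃ e ∈ ({s(v0, v1), s(v1, v2), s(v2, v3), s(v3, v4), s(v4, v0)} : Set (Sym2 V)),
      e ∈ M := by
    by_contra h
    push_neg at h
    have m0 : s(v0,v1) ∉ M := h _ (by simp)
    have m1 : s(v1,v2) ∉ M := h _ (by simp)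
    have m2 : s(v2,v3) ∉ M := h _ (by simp)
    have m3 : s(v3,v4) ∉ M := h _ (by simp)
    have m4 : s(v4,v0) ∉ M := h _ (by simp)
    have A0 := covA v0 v1 h01 m0
    have A1 := covA v1 v2 h12 m1
    have A2 := covA v2 v3 h23 m2
    have A3 := covA v3 v4 h34 m3
    have A4 := covA v4 v0 h40 m4
    by_cases hc0 : ∃ f ∈ M, v0 ∈ f
    · have hc1 : ¬ ∃ f ∈ M, v1 ∈ f := fun hc1 => A0 ⟨hc0, hc1⟩
      have hc2 : ∃ f ∈ M, v2 ∈ f := (covB v1 v2 h12).resolve_left hc1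
      have hc3 : ¬ ∃ f ∈ M, v3 ∈ f := fun hc3 => A2 ⟨hc2, hc3⟩
      have hc4 : ∃ f ∈ M, v4 ∈ f := (covB v3 v4 h34).resolve_left hc3
      exact A4 ⟨hc4, hc0⟩
    · have hc1 : ∃ f ∈ M, v1 ∈ f := (covB v0 v1 h01).resolve_left hc0
      have hc2 : ¬ ∃ f ∈ M, v2 ∈ f := fun hc2 => A1 ⟨hc1, hc2⟩
      have hc3 : ∃ f ∈ M, v3 ∈ f := (covB v2 v3 h23).resolve_left hc2
      have hc4 : ¬ ∃ f ∈ M, v4 ∈ f := fun hc4 => A3 ⟨hc3, hc4⟩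
      exact ((covB v4 v0 h40).resolve_left hc4).elim (fun _ h => hc0 ⟨_, h⟩) |>.elim
  obtain ⟨e, heS, heM⟩ := hex
  refine ⟨e, ⟨heS, heM⟩, ?_⟩
  rintro e' ⟨he'S, he'M⟩
  simp only [Set.mem_insert_iff, Set.mem_singleton_iff] at heS he'S
  rcases heS with rfl | rfl | rfl | rfl | rfl <;>
    rcases he'S with rfl | rfl | rfl | rfl | rfl <;>
    first
      | rfl
      | (apply uniq v0 v1 h01 _ _ he'M heM <;> (simp; done))
      | (apply uniq v1 v2 h12 _ _ he'M heM <;> (simp; done))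
      | (apply uniq v2 v3 h23 _ _ he'M heM <;> (simp; done))
      | (apply uniq v3 v4 h34 _ _ he'M heM <;> (simp; done))
      | (apply uniq v4 v0 h40 _ _ he'M heM <;> (simp; done))
end

section
/- If M is a dominating induced matching of G, then every induced cycle C_6 of G contains either exactly two edges of M or none. -/
lemma dim_unique {V : Type*} {G : SimpleGraph V} {M : Set (Sym2 V)}
    (hM : IsDIM G M) {e f g : Sym2 V} (hg : g ∈ G.edgeSet) (he : e ∈ M) (hf : f ∈ M)
    (hge : ∃ v, v ∈ g ∧ v ∈ e) (hgf : ∃ v, v ∈ g ∧ v ∈ f) : e = f := by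
  obtain ⟨u, -, hu⟩ := hM.2 g hg
  rw [hu e ⟨he, hge⟩, hu f ⟨hf, hgf⟩]

lemma mem_share {V : Type*} {G : SimpleGraph V} {M : Set (Sym2 V)}
    (hM : IsDIM G M) {e f : Sym2 V} (he : e ∈ M) (hf : f ∈ M) {w : V}
    (hwe : w ∈ e) (hwf : w ∈ f) : e = f :=
  dim_unique hM (hM.1 hf) he hf ⟨w, hwf, hwe⟩ ⟨w, hwf, hwf⟩

lemma opp {V : Type*} {G : SimpleGraph V} {M : Set (Sym2 V)}
    (hM : IsDIM G M) (v0 v1 v2 v3 v4 v5 : V)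
    (h02 : v0 ≠ v2) (h15 : v1 ≠ v5)
    (h01 : G.Adj v0 v1) (h12 : G.Adj v1 v2) (h23 : G.Adj v2 v3)
    (h34 : G.Adj v3 v4) (h45 : G.Adj v4 v5) (h50 : G.Adj v5 v0)
    (h0 : s(v0, v1) ∈ M) : s(v3, v4) ∈ M := by
  obtain ⟨f, ⟨hfM, w, hw23, hwf⟩, -⟩ := hM.2 s(v2, v3) ((G.mem_edgeSet).mpr h23)
  have hv3f : v3 ∈ f := by
    rcases Sym2.mem_iff.mp hw23 with h | h
    · subst h
      exfalso
      have hfe : f = s(v0, v1) := dim_unique hM ((G.mem_edgeSet).mpr h12) hfM h0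
        ⟨w, Sym2.mem_iff.mpr (Or.inr rfl), hwf⟩
        ⟨v1, Sym2.mem_iff.mpr (Or.inl rfl), Sym2.mem_iff.mpr (Or.inr rfl)⟩
      rw [hfe] at hwf
      rcases Sym2.mem_iff.mp hwf with h | h
      · exact h02 h.symm
      · exact h12.ne h.symm
    · subst h; exact hwf
  obtain ⟨g, ⟨hgM, u, hu45, hug⟩, -⟩ := hM.2 s(v4, v5) ((G.mem_edgeSet).mpr h45)
  have hv4g : v4 ∈ g := by
    rcases Sym2.mem_iff.mp hu45 with h | h
    · subst h; exact hug
    · subst h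
      exfalso
      have hge : g = s(v0, v1) := dim_unique hM ((G.mem_edgeSet).mpr h50) hgM h0
        ⟨u, Sym2.mem_iff.mpr (Or.inl rfl), hug⟩
        ⟨v0, Sym2.mem_iff.mpr (Or.inr rfl), Sym2.mem_iff.mpr (Or.inl rfl)⟩
      rw [hge] at hug
      rcases Sym2.mem_iff.mp hug with h | h
      · exact h50.ne h
      · exact h15 h.symm
  have hfg : f = g := dim_unique hM ((G.mem_edgeSet).mpr h34) hfM hgM
    ⟨v3, Sym2.mem_iff.mpr (Or.inl rfl), hv3f⟩
    ⟨v4, Sym2.mem_iff.mpr (Or.inr rfl), hv4g⟩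
  have : f = s(v3, v4) := (Sym2.mem_and_mem_iff h34.ne).mp ⟨hv3f, hfg ▸ hv4g⟩
  rwa [this] at hfM

theorem stmt_6 {V : Type*} [Fintype V] (G : SimpleGraph V) (M : Set (Sym2 V))
    (hM : IsDIM G M) (v0 v1 v2 v3 v4 v5 : V)
    (h02 : v0 ≠ v2) (h03 : v0 ≠ v3) (h04 : v0 ≠ v4) (h13 : v1 ≠ v3)
    (h14 : v1 ≠ v4) (h15 : v1 ≠ v5) (h24 : v2 ≠ v4) (h25 : v2 ≠ v5) (h35 : v3 ≠ v5)
    (h01 : G.Adj v0 v1) (h12 : G.Adj v1 v2) (h23 : G.Adj v2 v3)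
    (h34 : G.Adj v3 v4) (h45 : G.Adj v4 v5) (h50 : G.Adj v5 v0)
    (n02 : ¬ G.Adj v0 v2) (n03 : ¬ G.Adj v0 v3) (n04 : ¬ G.Adj v0 v4)
    (n13 : ¬ G.Adj v1 v3) (n14 : ¬ G.Adj v1 v4) (n15 : ¬ G.Adj v1 v5)
    (n24 : ¬ G.Adj v2 v4) (n25 : ¬ G.Adj v2 v5) (n35 : ¬ G.Adj v3 v5) :
    (∀ e ∈ ({s(v0, v1), s(v1, v2), s(v2, v3), s(v3, v4), s(v4, v5), s(v5, v0)} :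
        Set (Sym2 V)), e ∉ M) ∨
    (∃ e f, e ∈ ({s(v0, v1), s(v1, v2), s(v2, v3), s(v3, v4), s(v4, v5), s(v5, v0)} :
        Set (Sym2 V)) ∧
      f ∈ ({s(v0, v1), s(v1, v2), s(v2, v3), s(v3, v4), s(v4, v5), s(v5, v0)} :
        Set (Sym2 V)) ∧ e ≠ f ∧ e ∈ M ∧ f ∈ M ∧
      ∀ g ∈ ({s(v0, v1), s(v1, v2), s(v2, v3), s(v3, v4), s(v4, v5), s(v5, v0)} :
        Set (Sym2 V)), g ∈ M → g = e ∨ g = f) := by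
  -- helper: two distinct M-edges can't share a vertex; phrased for cycle edges
  have adj_excl : ∀ {a b c : V}, s(a, b) ∈ M → s(b, c) ∈ M → a ≠ b → a ≠ c → False := by
    intro a b c hab hbc hne hne'
    have h := mem_share hM hab hbc (w := b)
      (Sym2.mem_iff.mpr (Or.inr rfl)) (Sym2.mem_iff.mpr (Or.inl rfl))
    have : a ∈ s(b, c) := h ▸ Sym2.mem_iff.mpr (Or.inl rfl)
    rcases Sym2.mem_iff.mp this with h' | h'
    · exact hne h'
    · exact hne' h'
  by_cases m0 : s(v0, v1) ∈ M
  · -- e0 and e3 are in M, the rest not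
    have m3 : s(v3, v4) ∈ M := opp hM v0 v1 v2 v3 v4 v5 h02 h15 h01 h12 h23 h34 h45 h50 m0
    refine Or.inr ⟨s(v0, v1), s(v3, v4), by simp, by simp, ?_, m0, m3, ?_⟩
    · intro h
      have : v0 ∈ s(v3, v4) := h ▸ Sym2.mem_iff.mpr (Or.inl rfl)
      rcases Sym2.mem_iff.mp this with h' | h'
      · exact h03 h'
      · exact h04 h'
    · intro g hg hgM
      have m1 : s(v1, v2) ∉ M := fun h => adj_excl m0 h h01.ne h02
      have m5 : s(v5, v0) ∉ M := fun h => adj_excl h m0 h50.ne (h15.symm)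
      have m2 : s(v2, v3) ∉ M := fun h => adj_excl h m3 h23.ne (h24)
      have m4 : s(v4, v5) ∉ M := fun h => adj_excl m3 h h34.ne (h35)
      rcases hg with h | h | h | h | h | h <;> subst h <;> tauto
  · by_cases m1 : s(v1, v2) ∈ M
    · have m4 : s(v4, v5) ∈ M := opp hM v1 v2 v3 v4 v5 v0 h13 h02.symm h12 h23 h34 h45 h50 h01 m1
      refine Or.inr ⟨s(v1, v2), s(v4, v5), by simp, by simp, ?_, m1, m4, ?_⟩
      · intro h
        have : v1 ∈ s(v4, v5) := h ▸ Sym2.mem_iff.mpr (Or.inl rfl)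
        rcases Sym2.mem_iff.mp this with h' | h'
        · exact h14 h'
        · exact h15 h'
      · intro g hg hgM
        have m2 : s(v2, v3) ∉ M := fun h => adj_excl m1 h h12.ne h13
        have m3 : s(v3, v4) ∉ M := fun h => adj_excl h m4 h34.ne h35
        have m5 : s(v5, v0) ∉ M := fun h => adj_excl m4 h h45.ne (fun e => h04 e.symm)
        rcases hg with h | h | h | h | h | h <;> subst h <;> tauto
    · by_cases m2 : s(v2, v3) ∈ M
      · have m5 : s(v5, v0) ∈ M :=
          opp hM v2 v3 v4 v5 v0 v1 h24 h13.symm h23 h34 h45 h50 h01 h12 m2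
        refine Or.inr ⟨s(v2, v3), s(v5, v0), by simp, by simp, ?_, m2, m5, ?_⟩
        · intro h
          have : v2 ∈ s(v5, v0) := h ▸ Sym2.mem_iff.mpr (Or.inl rfl)
          rcases Sym2.mem_iff.mp this with h' | h'
          · exact h25 h'
          · exact h02 h'.symm
        · intro g hg hgM
          have m3 : s(v3, v4) ∉ M := fun h => adj_excl m2 h h23.ne h24
          have m4 : s(v4, v5) ∉ M := fun h => adj_excl h m5 h45.ne (fun e => h04 e.symm)
          rcases hg with h | h | h | h | h | h <;> subst h <;> tauto
      · -- none of e0,e1,e2 in M ⇒ none of e3,e4,e5 either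
        have m3 : s(v3, v4) ∉ M := fun h =>
          m0 (opp hM v3 v4 v5 v0 v1 v2 h35 h24.symm h34 h45 h50 h01 h12 h23 h)
        have m4 : s(v4, v5) ∉ M := fun h =>
          m1 (opp hM v4 v5 v0 v1 v2 v3 (fun e => h04 e.symm) h35.symm h45 h50 h01 h12 h23 h34 h)
        have m5 : s(v5, v0) ∉ M := fun h =>
          m2 (opp hM v5 v0 v1 v2 v3 v4 h15.symm h04 h50 h01 h12 h23 h34 h45 h)
        refine Or.inl ?_
        intro e he
        rcases he with h | h | h | h | h | h <;> subst h <;> assumption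
end

section
/- If M is a dominating induced matching of G and v_1, v_2, v_3, v_4, u induce a butterfly in G (edges v_1v_2 and v_3v_4, u adjacent to all of v_1, v_2, v_3, v_4, and no other edges among these five vertices), then both peripheral edges v_1v_2 and v_3v_4 belong to M. -/
lemma dim_core {V : Type*} (G : SimpleGraph V) (M : Set (Sym2 V))
    (hM : IsDIM G M) (v1 v2 v3 v4 u : V)
    (d13 : v1 ≠ v3) (d14 : v1 ≠ v4)
    (h12 : G.Adj v1 v2) (h34 : G.Adj v3 v4)
    (hu1 : G.Adj u v1) (hu2 : G.Adj u v2) (hu3 : G.Adj u v3) (hu4 : G.Adj u v4)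
    (n13 : ¬ G.Adj v1 v3) (n14 : ¬ G.Adj v1 v4)
    (f : Sym2 V) (hf : f ∈ M) (hv1 : v1 ∈ f) : f = s(v1, v2) := by
  obtain ⟨hsub, huniq⟩ := hM
  obtain ⟨w, rfl⟩ := Sym2.mem_iff_exists.mp hv1
  have hvw : G.Adj v1 w := hsub hf
  have hwne3 : w ≠ v3 := fun h => n13 (h ▸ hvw)
  have hwne4 : w ≠ v4 := fun h => n14 (h ▸ hvw)
  by_cases hw2 : w = v2
  · rw [hw2]
  exfalso
  by_cases hwu : w = u
  · rw [hwu] at hf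
    obtain ⟨g, ⟨hgM, y, hy, hyg⟩, _⟩ := huniq s(v3, v4) (G.mem_edgeSet.mpr h34)
    rw [Sym2.mem_iff] at hy
    have hey : G.Adj u y := by rcases hy with rfl | rfl; exacts [hu3, hu4]
    have hfg : s(v1, u) = g := (huniq s(u, y) (G.mem_edgeSet.mpr hey)).unique
      ⟨hf, u, by simp, by simp⟩ ⟨hgM, y, by simp, hyg⟩
    rw [← hfg, Sym2.mem_iff] at hyg
    rcases hy with rfl | rfl <;> rcases hyg with h | h
    · exact d13 h.symm
    · exact hu3.ne h.symm
    · exact d14 h.symm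
    · exact hu4.ne h.symm
  · obtain ⟨k, ⟨hkM, z, hz, hzk⟩, _⟩ := huniq s(u, v2) (G.mem_edgeSet.mpr hu2)
    have hunk : u ∉ k := by
      intro huk
      have hk : k = s(v1, w) := (huniq s(u, v1) (G.mem_edgeSet.mpr hu1)).unique
        ⟨hkM, u, by simp, huk⟩ ⟨hf, v1, by simp, by simp⟩
      rw [hk, Sym2.mem_iff] at huk
      rcases huk with h | h
      · exact hu1.ne h
      · exact hwu h.symm
    rw [Sym2.mem_iff] at hz
    have hv2k : v2 ∈ k := by rcases hz with rfl | rfl; exacts [absurd hzk hunk, hzk]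
    have hk : k = s(v1, w) := (huniq s(v1, v2) (G.mem_edgeSet.mpr h12)).unique
      ⟨hkM, v2, by simp, hv2k⟩ ⟨hf, v1, by simp, by simp⟩
    rw [hk, Sym2.mem_iff] at hv2k
    rcases hv2k with h | h
    · exact h12.ne' h
    · exact hw2 h.symm

lemma dim_half {V : Type*} (G : SimpleGraph V) (M : Set (Sym2 V))
    (hM : IsDIM G M) (v1 v2 v3 v4 u : V)
    (d13 : v1 ≠ v3) (d14 : v1 ≠ v4) (d23 : v2 ≠ v3) (d24 : v2 ≠ v4)
    (h12 : G.Adj v1 v2) (h34 : G.Adj v3 v4)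
    (hu1 : G.Adj u v1) (hu2 : G.Adj u v2) (hu3 : G.Adj u v3) (hu4 : G.Adj u v4)
    (n13 : ¬ G.Adj v1 v3) (n14 : ¬ G.Adj v1 v4)
    (n23 : ¬ G.Adj v2 v3) (n24 : ¬ G.Adj v2 v4) :
    s(v1, v2) ∈ M := by
  obtain ⟨f, ⟨hfM, x, hx, hxf⟩, _⟩ := hM.2 s(v1, v2) (G.mem_edgeSet.mpr h12)
  rw [Sym2.mem_iff] at hx
  rcases hx with rfl | rfl
  · have h := dim_core G M hM x v2 v3 v4 u d13 d14 h12 h34 hu1 hu2 hu3 hu4 n13 n14 f hfM hxf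
    exact h ▸ hfM
  · have h := dim_core G M hM x v1 v3 v4 u d23 d24 h12.symm h34 hu2 hu1 hu3 hu4 n23 n24 f hfM hxf
    rw [show s(v1, x) = f from by rw [h, Sym2.eq_swap]]
    exact hfM

theorem stmt_9 {V : Type*} [Fintype V] (G : SimpleGraph V) (M : Set (Sym2 V))
    (hM : IsDIM G M) (v1 v2 v3 v4 u : V)
    (d13 : v1 ≠ v3) (d14 : v1 ≠ v4) (d23 : v2 ≠ v3) (d24 : v2 ≠ v4)
    (h12 : G.Adj v1 v2) (h34 : G.Adj v3 v4)
    (hu1 : G.Adj u v1) (hu2 : G.Adj u v2) (hu3 : G.Adj u v3) (hu4 : G.Adj u v4)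
    (n13 : ¬ G.Adj v1 v3) (n14 : ¬ G.Adj v1 v4)
    (n23 : ¬ G.Adj v2 v3) (n24 : ¬ G.Adj v2 v4) :
    s(v1, v2) ∈ M ∧ s(v3, v4) ∈ M := by
  constructor
  · exact dim_half G M hM v1 v2 v3 v4 u d13 d14 d23 d24 h12 h34 hu1 hu2 hu3 hu4 n13 n14 n23 n24
  · exact dim_half G M hM v3 v4 v1 v2 u d13.symm d23.symm d14.symm d24.symm h34 h12
      hu3 hu4 hu1 hu2 (fun h => n13 h.symm) (fun h => n23 h.symm)
      (fun h => n14 h.symm) (fun h => n24 h.symm)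
end

section
/- Let G be a graph with a dominating induced matching M and let xy ∈ M. Let N_1 = {v : dist(v, {x,y}) = 1} and N_2 = {v : dist(v, {x,y}) = 2} be the distance levels of the edge xy. Then N_1 is an independent set disjoint from V(M), and N_2 ⊆ V(M). -/
/-- `v` is covered by (is an endpoint of) some edge of `M`. -/
def CoveredBy {V : Type*} (M : Set (Sym2 V)) (v : V) : Prop :=
  ∃ e ∈ M, v ∈ e

private lemma keyA {V : Type*} (G : SimpleGraph V) (M : Set (Sym2 V))
    (hM : IsDIM G M) (x y : V) (hxyM : s(x, y) ∈ M) (v : V)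
    (hadj : G.Adj v x ∨ G.Adj v y) (hvx : v ≠ x) (hvy : v ≠ y) :
    ¬ CoveredBy M v := by
  rintro ⟨f, hfM, hvf⟩
  rcases hadj with h | h
  · have he : s(v, x) ∈ G.edgeSet := h
    obtain ⟨g, _, hgu⟩ := hM.2 _ he
    have h1 : s(x, y) = g := (hgu s(x,y) ⟨hxyM, x, by simp, by simp⟩).symm ▸ rfl
    have h2 : f = g := hgu f ⟨hfM, v, by simp, hvf⟩
    have := hgu s(x,y) ⟨hxyM, x, by simp, by simp⟩
    rw [h2, ← this] at hvf
    rcases Sym2.mem_iff.mp hvf with rfl | rfl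
    · exact hvx rfl
    · exact hvy rfl
  · have he : s(v, y) ∈ G.edgeSet := h
    obtain ⟨g, _, hgu⟩ := hM.2 _ he
    have h2 : f = g := hgu f ⟨hfM, v, by simp, hvf⟩
    have := hgu s(x,y) ⟨hxyM, y, by simp, by simp⟩
    rw [h2, ← this] at hvf
    rcases Sym2.mem_iff.mp hvf with rfl | rfl
    · exact hvx rfl
    · exact hvy rfl

private lemma minN1 {V : Type*} (G : SimpleGraph V) (x y v : V)
    (h : min (G.dist v x) (G.dist v y) = 1) :
    (G.Adj v x ∨ G.Adj v y) ∧ v ≠ x ∧ v ≠ y := by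
  have hvx : v ≠ x := by rintro rfl; simp [SimpleGraph.dist_self] at h
  have hvy : v ≠ y := by rintro rfl; simp [SimpleGraph.dist_self] at h
  rcases min_eq_iff.mp h with ⟨h1, _⟩ | ⟨h1, _⟩
  · exact ⟨Or.inl (SimpleGraph.dist_eq_one_iff_adj.mp h1), hvx, hvy⟩
  · exact ⟨Or.inr (SimpleGraph.dist_eq_one_iff_adj.mp h1), hvx, hvy⟩

theorem stmt_13 {V : Type*} [Fintype V] (G : SimpleGraph V) (M : Set (Sym2 V))
    (hM : IsDIM G M) (x y : V) (hxy : G.Adj x y) (hxyM : s(x, y) ∈ M) :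
    (∀ v : V, min (G.dist v x) (G.dist v y) = 1 → ¬ CoveredBy M v) ∧
    (∀ u v : V, min (G.dist u x) (G.dist u y) = 1 →
      min (G.dist v x) (G.dist v y) = 1 → ¬ G.Adj u v) ∧
    (∀ v : V, min (G.dist v x) (G.dist v y) = 2 → CoveredBy M v) := by
  have part1 : ∀ v : V, min (G.dist v x) (G.dist v y) = 1 → ¬ CoveredBy M v := by
    intro v hv
    obtain ⟨hadj, hvx, hvy⟩ := minN1 G x y v hv
    exact keyA G M hM x y hxyM v hadj hvx hvy
  refine ⟨part1, ?_, ?_⟩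
  · intro u v hu hv huv
    obtain ⟨f, hfM, ⟨w, hw1, hw2⟩⟩ := (hM.2 s(u,v) huv).exists
    rcases Sym2.mem_iff.mp hw1 with rfl | rfl
    · exact part1 w hu ⟨f, hfM, hw2⟩
    · exact part1 w hv ⟨f, hfM, hw2⟩
  · intro v hv
    -- dist 2 case : find a neighbor w of v adjacent to x or y
    have hdist : G.dist v x = 2 ∨ G.dist v y = 2 := by
      rcases min_eq_iff.mp hv with ⟨h1, _⟩ | ⟨h1, _⟩
      · exact Or.inl h1
      · exact Or.inr h1
    have key : ∀ z z' : V, s(z,z') = s(x,y) → G.dist v z = 2 →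
        min (G.dist v x) (G.dist v y) = 2 → CoveredBy M v := by
      intro z z' hzz hd hmin
      obtain ⟨p, hp⟩ := SimpleGraph.exists_walk_of_dist_ne_zero (by omega : G.dist v z ≠ 0)
      rw [hd] at hp
      match p, hp with
      | SimpleGraph.Walk.cons (v := w) h1 (SimpleGraph.Walk.cons h2 SimpleGraph.Walk.nil), _ =>
        -- h1 : G.Adj v w, h2 : G.Adj w z
        have hwz' : w ≠ z' := by
          rintro rfl
          have : G.dist v w ≤ 1 := SimpleGraph.dist_le h1.toWalk |>.trans (by simp)
          have hx' : w = x ∨ w = y := by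
            have := Sym2.eq_iff.mp hzz
            tauto
          rcases hx' with rfl | rfl <;> omega
        have hwz : w ≠ z := h2.ne
        have hwx : w ≠ x ∧ w ≠ y := by
          have := Sym2.eq_iff.mp hzz
          rcases this with ⟨rfl, rfl⟩ | ⟨rfl, rfl⟩
          · exact ⟨hwz, hwz'⟩
          · exact ⟨hwz', hwz⟩
        have hadjw : G.Adj w x ∨ G.Adj w y := by
          have := Sym2.eq_iff.mp hzz
          rcases this with ⟨rfl, rfl⟩ | ⟨rfl, rfl⟩
          · exact Or.inl h2
          · exact Or.inr h2
        have hwunc : ¬ CoveredBy M w := keyA G M hM x y hxyM w hadjw hwx.1 hwx.2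
        obtain ⟨f, hfM, ⟨u, hu1, hu2⟩⟩ := (hM.2 s(v,w) h1).exists
        rcases Sym2.mem_iff.mp hu1 with rfl | rfl
        · exact ⟨f, hfM, hu2⟩
        · exact absurd ⟨f, hfM, hu2⟩ hwunc
    rcases hdist with h | h
    · exact key x y rfl h hv
    · exact key y x (Sym2.eq_swap) h hv
end

section
/- Let G be a graph with a dominating induced matching M containing edge xy, and let N_2, N_3 be the second and third distance levels of xy. Then no edge of M has both endpoints in N_3, and no edge of M has one endpoint in N_3 and one in N_4. -/
lemma key_aux {V : Type*} (G : SimpleGraph V) (M : Set (Sym2 V)) (hM : IsDIM G M)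
    (x y a b : V) (hab : s(a, b) ∈ M)
    (hmate : ∀ u : V, min (G.dist u x) (G.dist u y) = 2 →
      ∃ w : V, s(u, w) ∈ M ∧ min (G.dist w x) (G.dist w y) = 3)
    (hax : G.dist a x = 3) (hay : 3 ≤ G.dist a y) :
    min (G.dist b x) (G.dist b y) = 2 := by
  -- get a walk from a to x of length 3
  obtain ⟨p, hp⟩ := SimpleGraph.exists_walk_of_dist_ne_zero (G := G) (by omega :
    G.dist a x ≠ 0)
  rw [hax] at hp
  cases p with
  | nil => simp at hp
  | cons h q =>
    rename_i u
    simp only [SimpleGraph.Walk.length_cons] at hp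
    have hq2 : q.length = 2 := by omega
    -- dist u x = 2
    have hux_le : G.dist u x ≤ 2 := hq2 ▸ SimpleGraph.dist_le q
    have hux_ge : 2 ≤ G.dist u x := by
      by_contra hc
      push_neg at hc
      have hru : G.Reachable u x := ⟨q⟩
      obtain ⟨r, hr⟩ := hru.exists_walk_length_eq_dist
      have := SimpleGraph.dist_le (SimpleGraph.Walk.cons h r)
      simp only [SimpleGraph.Walk.length_cons, hr] at this
      omega
    have hux : G.dist u x = 2 := le_antisymm hux_le hux_ge
    -- dist u y ≥ 2
    have huy_ge : 2 ≤ G.dist u y := by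
      by_contra hc
      push_neg at hc
      interval_cases hd : G.dist u y
      · -- dist u y = 0 : u = y or unreachable
        rcases SimpleGraph.dist_eq_zero_iff_eq_or_not_reachable.mp hd with rfl | hnr
        · have := SimpleGraph.dist_le (SimpleGraph.Walk.cons h SimpleGraph.Walk.nil)
          simp at this; omega
        · -- a reachable to y since dist a y ≥ 3 > 0
          have : G.Reachable a y := SimpleGraph.Reachable.of_dist_ne_zero (by omega)
          exact hnr ((SimpleGraph.Adj.reachable h).symm.trans this)
      · have hadj : G.Adj u y := SimpleGraph.dist_eq_one_iff_adj.mp hd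
        have := SimpleGraph.dist_le
          (SimpleGraph.Walk.cons h (SimpleGraph.Walk.cons hadj SimpleGraph.Walk.nil))
        simp at this; omega
    have hmin : min (G.dist u x) (G.dist u y) = 2 := by omega
    obtain ⟨w, hwM, hw3⟩ := hmate u hmin
    -- edge a-u of G
    have he : s(a, u) ∈ G.edgeSet := h
    obtain ⟨f, -, hfu⟩ := hM.2 _ he
    have h1 : s(u, w) = f := hfu _ ⟨hwM, u, by simp, by simp⟩
    have h2 : s(a, b) = f := hfu _ ⟨hab, a, by simp, by simp⟩
    have heq : s(u, w) = s(a, b) := h1.trans h2.symm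
    rw [Sym2.eq_iff] at heq
    rcases heq with ⟨rfl, rfl⟩ | ⟨rfl, rfl⟩
    · omega
    · omega

theorem stmt_14 {V : Type*} [Fintype V] (G : SimpleGraph V) (M : Set (Sym2 V))
    (hM : IsDIM G M) (x y : V) (hxy : G.Adj x y) (hxyM : s(x, y) ∈ M)
    (hmate : ∀ u : V, min (G.dist u x) (G.dist u y) = 2 →
      ∃ w : V, s(u, w) ∈ M ∧ min (G.dist w x) (G.dist w y) = 3) :
    ∀ a b : V, s(a, b) ∈ M →
      ¬ (min (G.dist a x) (G.dist a y) = 3 ∧ min (G.dist b x) (G.dist b y) = 3) ∧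
      ¬ (min (G.dist a x) (G.dist a y) = 3 ∧ min (G.dist b x) (G.dist b y) = 4) := by
  intro a b hab
  have hb2 : min (G.dist a x) (G.dist a y) = 3 → min (G.dist b x) (G.dist b y) = 2 := by
    intro ha
    rcases le_or_gt (G.dist a x) (G.dist a y) with hle | hlt
    · exact key_aux G M hM x y a b hab hmate (by omega) (by omega)
    · have hmate' : ∀ u : V, min (G.dist u y) (G.dist u x) = 2 →
          ∃ w : V, s(u, w) ∈ M ∧ min (G.dist w y) (G.dist w x) = 3 := by
        intro u hu
        obtain ⟨w, hw1, hw2⟩ := hmate u (by omega)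
        exact ⟨w, hw1, by omega⟩
      have := key_aux G M hM y x a b hab hmate' (by omega) (by omega)
      omega
  constructor <;> rintro ⟨h1, h2⟩ <;> have := hb2 h1 <;> omega
end

section
/- Let G be a graph with a dominating induced matching M containing edge xy, such that every vertex of N_2 is matched by M to a vertex of N_3 (where N_i are the distance levels of xy). If a, b, c induce a triangle with a ∈ N_3 and b, c ∈ N_4, then bc ∈ M. -/
private lemma dist_le_succ' {V : Type*} {G : SimpleGraph V} {v u x : V}
    (hadj : G.Adj v u) (hr : G.Reachable u x) : G.dist v x ≤ G.dist u x + 1 := by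
  obtain ⟨p, hp⟩ := hr.exists_walk_length_eq_dist
  have := G.dist_le (SimpleGraph.Walk.cons hadj p)
  simpa [hp] using this

private lemma exists_adj_dist' {V : Type*} {G : SimpleGraph V} {v x : V} {n : ℕ}
    (h : G.dist v x = n + 1) : ∃ u, G.Adj v u ∧ G.dist u x = n := by
  have hr : G.Reachable v x := SimpleGraph.Reachable.of_dist_ne_zero (by omega)
  obtain ⟨p, hp⟩ := hr.exists_walk_length_eq_dist
  rw [h] at hp
  cases p with
  | nil => simp at hp
  | @cons _ u _ hadj q =>
    have hq : q.length = n := by simpa using hp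
    have h1 : G.dist u x ≤ n := hq ▸ G.dist_le q
    have h2 := dist_le_succ' hadj (⟨q⟩ : G.Reachable u x)
    exact ⟨u, hadj, by omega⟩

section Aux
variable {V : Type*} {G : SimpleGraph V} {M : Set (Sym2 V)} {x y : V}

/-- A vertex at level 3 has a neighbor at level 2. -/
private lemma exists_level2_neighbor (hxy : G.Adj x y) {v : V}
    (hv : min (G.dist v x) (G.dist v y) = 3) :
    ∃ u, G.Adj v u ∧ min (G.dist u x) (G.dist u y) = 2 := by
  rcases min_cases (G.dist v x) (G.dist v y) with ⟨h1, h2⟩ | ⟨h1, h2⟩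
  · rw [h1] at hv
    obtain ⟨u, hadj, hu⟩ := exists_adj_dist' (n := 2) (by omega : G.dist v x = 2 + 1)
    have hry : G.Reachable u y := by
      have hrx : G.Reachable u x := SimpleGraph.Reachable.of_dist_ne_zero (by omega)
      exact hrx.trans ⟨hxy.toWalk⟩
    have h3 : G.dist v y ≤ G.dist u y + 1 := dist_le_succ' hadj hry
    exact ⟨u, hadj, by omega⟩
  · rw [h1] at hv
    obtain ⟨u, hadj, hu⟩ := exists_adj_dist' (n := 2) (by omega : G.dist v y = 2 + 1)
    have hrx : G.Reachable u x := by
      have hry : G.Reachable u y := SimpleGraph.Reachable.of_dist_ne_zero (by omega)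
      exact hry.trans ⟨hxy.symm.toWalk⟩
    have h3 : G.dist v x ≤ G.dist u x + 1 := dist_le_succ' hadj hrx
    exact ⟨u, hadj, by omega⟩

/-- If an `M`-edge has an endpoint at level 3, its other endpoint is at level 2. -/
private lemma level2_of_mate (hM : IsDIM G M) (hxy : G.Adj x y)
    (hmate : ∀ u : V, min (G.dist u x) (G.dist u y) = 2 →
      ∃ w : V, s(u, w) ∈ M ∧ min (G.dist w x) (G.dist w y) = 3)
    {v t : V} (hvt : s(v, t) ∈ M) (hv : min (G.dist v x) (G.dist v y) = 3) :
    min (G.dist t x) (G.dist t y) = 2 := by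
  obtain ⟨u, hadj, hu⟩ := exists_level2_neighbor hxy hv
  obtain ⟨w, hw, hw3⟩ := hmate u hu
  have hedge : s(v, u) ∈ G.edgeSet := hadj
  obtain ⟨f, -, huniq⟩ := hM.2 _ hedge
  have e1 : s(v, t) = f := huniq _ ⟨hvt, v, by simp, by simp⟩
  have e2 : s(u, w) = f := huniq _ ⟨hw, u, by simp, by simp⟩
  have : s(v, t) = s(u, w) := e1.trans e2.symm
  rw [Sym2.eq_iff] at this
  rcases this with ⟨hvu, htw⟩ | ⟨hvw, htu⟩
  · subst hvu; omega
  · subst htu; exact hu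

private lemma aux_key (hM : IsDIM G M) (hxy : G.Adj x y)
    (hmate : ∀ u : V, min (G.dist u x) (G.dist u y) = 2 →
      ∃ w : V, s(u, w) ∈ M ∧ min (G.dist w x) (G.dist w y) = 3)
    {a b c : V}
    (hab : G.Adj a b) (hbc : G.Adj b c) (hac : G.Adj a c)
    (ha : min (G.dist a x) (G.dist a y) = 3)
    (hb : min (G.dist b x) (G.dist b y) = 4)
    {f : Sym2 V} (hfM : f ∈ M) (hbf : b ∈ f) :
    s(b, c) ∈ M := by
  obtain ⟨t, rfl⟩ := Sym2.mem_iff_exists.mp hbf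
  by_cases htc : t = c
  · subst htc; exact hfM
  exfalso
  -- the unique M-edge meeting bc
  obtain ⟨e, -, huniq_bc⟩ := hM.2 _ (G.mem_edgeSet.mpr hbc)
  -- the M-edge meeting ac
  obtain ⟨g, ⟨hgM, z, hz, hzg⟩, -⟩ := hM.2 _ (G.mem_edgeSet.mpr hac)
  rcases Sym2.mem_iff.mp hz with rfl | rfl
  · -- g contains a, so its other endpoint is at level 2
    obtain ⟨u', rfl⟩ := Sym2.mem_iff_exists.mp hzg
    have hu2 : min (G.dist u' x) (G.dist u' y) = 2 := level2_of_mate hM hxy hmate hgM ha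
    -- edge ab meets both s(b,t) and s(z,u')
    obtain ⟨e', -, huniq_ab⟩ := hM.2 _ (G.mem_edgeSet.mpr hab)
    have e1 : s(b, t) = e' := huniq_ab _ ⟨hfM, b, by simp, by simp⟩
    have e2 : s(z, u') = e' := huniq_ab _ ⟨hgM, z, by simp, by simp⟩
    have : s(b, t) = s(z, u') := e1.trans e2.symm
    rw [Sym2.eq_iff] at this
    rcases this with ⟨hbz, -⟩ | ⟨hbu, -⟩
    · subst hbz; omega
    · subst hbu; omega
  · -- g contains c: edge bc meets both s(b,t) and g
    obtain ⟨u', rfl⟩ := Sym2.mem_iff_exists.mp hzg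
    have e1 : s(b, t) = e := huniq_bc _ ⟨hfM, b, by simp, by simp⟩
    have e2 : s(z, u') = e := huniq_bc _ ⟨hgM, z, by simp, by simp⟩
    have : s(b, t) = s(z, u') := e1.trans e2.symm
    rw [Sym2.eq_iff] at this
    rcases this with ⟨hbz, htu⟩ | ⟨hbu, htu⟩
    · exact hbc.ne hbz
    · exact htc htu

end Aux

theorem stmt_15 {V : Type*} [Fintype V] (G : SimpleGraph V) (M : Set (Sym2 V))
    (hM : IsDIM G M) (x y : V) (hxy : G.Adj x y) (hxyM : s(x, y) ∈ M)
    (hmate : ∀ u : V, min (G.dist u x) (G.dist u y) = 2 →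
      ∃ w : V, s(u, w) ∈ M ∧ min (G.dist w x) (G.dist w y) = 3)
    (a b c : V)
    (hab : G.Adj a b) (hbc : G.Adj b c) (hac : G.Adj a c)
    (ha : min (G.dist a x) (G.dist a y) = 3)
    (hb : min (G.dist b x) (G.dist b y) = 4)
    (hc : min (G.dist c x) (G.dist c y) = 4) :
    s(b, c) ∈ M := by
  obtain ⟨f, ⟨hfM, v, hv, hvf⟩, -⟩ := hM.2 _ (G.mem_edgeSet.mpr hbc)
  rcases Sym2.mem_iff.mp hv with rfl | rfl
  · exact aux_key hM hxy hmate hab hbc hac ha hb hfM hvf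
  · rw [Sym2.eq_swap]
    exact aux_key hM hxy hmate hac hbc.symm hab ha hc hfM hvf
end

section
/- Let G be a K_4-free, diamond-free graph with a dominating induced matching M containing edge xy, with distance levels N_i, such that N_2 = {u_1, ..., u_k} is independent and each u_i is matched by M to a vertex u_i' ∈ N_3. Define T_i = {t ∈ N_3 : N(t) ∩ N_2 = {u_i}}. Then for each i, T_i ∩ V(M) = {u_i'}, i.e., u_i' is the only M-covered vertex among the private N_3-neighbors of u_i. -/
/-- `G` has no four pairwise adjacent vertices. -/
def K4Free {V : Type*} (G : SimpleGraph V) : Prop :=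
  ¬ ∃ a b c d : V, G.Adj a b ∧ G.Adj a c ∧ G.Adj a d ∧
      G.Adj b c ∧ G.Adj b d ∧ G.Adj c d

/-- `G` has no induced diamond (`K_4` minus an edge). -/
def DiamondFree {V : Type*} (G : SimpleGraph V) : Prop :=
  ¬ ∃ v1 v2 v3 u : V, v1 ≠ v3 ∧ G.Adj v1 v2 ∧ G.Adj v2 v3 ∧ ¬ G.Adj v1 v3 ∧
      G.Adj u v1 ∧ G.Adj u v2 ∧ G.Adj u v3

theorem stmt_16 {V : Type*} [Fintype V] (G : SimpleGraph V) (M : Set (Sym2 V))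
    (hK4 : K4Free G) (hD : DiamondFree G)
    (hM : IsDIM G M) (x y : V) (hxy : G.Adj x y) (hxyM : s(x, y) ∈ M)
    (hN2indep : ∀ u v : V, min (G.dist u x) (G.dist u y) = 2 →
      min (G.dist v x) (G.dist v y) = 2 → ¬ G.Adj u v)
    (hmate : ∀ u : V, min (G.dist u x) (G.dist u y) = 2 →
      ∃ w : V, s(u, w) ∈ M ∧ min (G.dist w x) (G.dist w y) = 3)
    (u u' : V) (hu : min (G.dist u x) (G.dist u y) = 2)
    (huu' : s(u, u') ∈ M) (hu' : min (G.dist u' x) (G.dist u' y) = 3) :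
    ∀ t : V, min (G.dist t x) (G.dist t y) = 3 → G.Adj u t →
      (∀ w : V, G.Adj t w → min (G.dist w x) (G.dist w y) = 2 → w = u) →
      (CoveredBy M t ↔ t = u') := by
  intro t ht hut _
  constructor
  · rintro ⟨e, heM, hte⟩
    have hut' : s(u, t) ∈ G.edgeSet := hut
    obtain ⟨f, -, huniq⟩ := hM.2 _ hut'
    have h1 : e = f := huniq e ⟨heM, t, by simp, hte⟩
    have h2 : s(u, u') = f := huniq _ ⟨huu', u, by simp, by simp⟩
    have : t ∈ s(u, u') := h2 ▸ h1 ▸ hte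
    rcases Sym2.mem_iff.mp this with h | h
    · subst h; omega
    · exact h
  · rintro rfl
    exact ⟨_, huu', by simp⟩
end

section
/- Let G be a graph with a dominating induced matching M containing edge xy, with distance levels N_i, such that no edge of M lies within N_3 or between N_3 and N_4. Then the subgraph of G induced by N_3 is bipartite (equivalently, triangle-free together with no odd cycles: it contains no odd cycle). -/
/-!
Colour each vertex by whether it is covered by `M`. An edge `ab ∉ M` meets exactly one edge
`f ∈ M`; if both `a` and `b` were covered, `f` would contain both and so equal `ab`. Hence every
edge outside `M` joins a covered and an uncovered vertex, i.e. `G` minus the edges of `M` is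
bipartite. An odd cycle inside `N_3` uses no edge of `M`, so it is an odd cycle of that bipartite
graph, which is impossible.
-/

open SimpleGraph

namespace IsDIM

variable {V : Type*} {G : SimpleGraph V} {M : Set (Sym2 V)}

theorem covered_iff_not_covered_of_adj (hM : IsDIM G M) {a b : V} (hab : G.Adj a b)
    (habM : s(a, b) ∉ M) : (∃ f ∈ M, a ∈ f) ↔ ¬ ∃ f ∈ M, b ∈ f := by
  obtain ⟨f, ⟨hfM, w, hwab, hwf⟩, huniq⟩ := hM.2 s(a, b) hab
  constructor
  · rintro ⟨fa, hfaM, hafa⟩ ⟨fb, hfbM, hbfb⟩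
    obtain rfl : fa = f := huniq fa ⟨hfaM, a, Sym2.mem_mk_left a b, hafa⟩
    obtain rfl : fb = fa := huniq fb ⟨hfbM, b, Sym2.mem_mk_right a b, hbfb⟩
    exact habM ((Sym2.mem_and_mem_iff hab.ne).mp ⟨hafa, hbfb⟩ ▸ hfM)
  · intro hb
    rcases Sym2.mem_iff.mp hwab with rfl | rfl
    · exact ⟨f, hfM, hwf⟩
    · exact absurd ⟨f, hfM, hwf⟩ hb

theorem colorable_deleteEdges (hM : IsDIM G M) : (G.deleteEdges M).Colorable 2 := by
  classical
  refine Coloring.colorable (Coloring.mk (fun v => decide (∃ f ∈ M, v ∈ f)) ?_)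
  intro a b hab
  rw [deleteEdges_adj] at hab
  simp only [ne_eq, decide_eq_decide, hM.covered_iff_not_covered_of_adj hab.1 hab.2]
  exact not_iff_self

theorem even_length_of_forall_edges_notMem (hM : IsDIM G M) {u : V} (p : G.Walk u u)
    (hp : ∀ e ∈ p.edges, e ∉ M) : Even p.length := by
  have hsub : ∀ e ∈ p.edges, e ∈ (G.deleteEdges M).edgeSet := fun e he => by
    rw [edgeSet_deleteEdges]
    exact ⟨p.edges_subset_edgeSet he, hp e he⟩
  rw [← p.length_transfer hsub]
  exact two_colorable_iff_forall_loop_even.mp hM.colorable_deleteEdges u _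

end IsDIM

theorem stmt_17_general {V : Type*} (G : SimpleGraph V) (M : Set (Sym2 V))
    (hM : IsDIM G M) (x y : V)
    (hno : ∀ a b : V, s(a, b) ∈ M →
      ¬ (min (G.dist a x) (G.dist a y) = 3 ∧ min (G.dist b x) (G.dist b y) = 3) ∧
      ¬ (min (G.dist a x) (G.dist a y) = 3 ∧ min (G.dist b x) (G.dist b y) = 4)) :
    ∀ (v : V) (c : G.Walk v v), c.IsCycle →
      (∀ w ∈ c.support, min (G.dist w x) (G.dist w y) = 3) →
      ¬ Odd c.length := by
  intro v c _ hlvl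
  rw [Nat.not_odd_iff_even]
  refine hM.even_length_of_forall_edges_notMem c fun e he => ?_
  induction e using Sym2.ind with
  | h a b =>
    exact fun habM => (hno a b habM).1
      ⟨hlvl a (c.fst_mem_support_of_mem_edges he), hlvl b (c.snd_mem_support_of_mem_edges he)⟩

theorem stmt_17 {V : Type*} [Fintype V] (G : SimpleGraph V) (M : Set (Sym2 V))
    (hM : IsDIM G M) (x y : V) (hxy : G.Adj x y) (hxyM : s(x, y) ∈ M)
    (hno : ∀ a b : V, s(a, b) ∈ M →
      ¬ (min (G.dist a x) (G.dist a y) = 3 ∧ min (G.dist b x) (G.dist b y) = 3) ∧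
      ¬ (min (G.dist a x) (G.dist a y) = 3 ∧ min (G.dist b x) (G.dist b y) = 4)) :
    ∀ (v : V) (c : G.Walk v v), c.IsCycle →
      (∀ w ∈ c.support, min (G.dist w x) (G.dist w y) = 3) →
      ¬ Odd c.length :=
  stmt_17_general G M hM x y hno
end

section
/- Suppose G has a dominating induced matching M with xy ∈ M, N_2 = {u_1,...,u_k} independent with M-mates in N_3, and T_i, T_j (i ≠ j) are the private N_3-neighbor sets of u_i, u_j. Then there are no three edges between T_i and T_j with pairwise distinct endpoints on both sides. -/
/-- `t` is a private `N_3`-neighbor of `u ∈ N_2` (w.r.t. the distance levels of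
the edge `xy`): `t` is at distance 3 from `{x,y}`, adjacent to `u`, and `u` is
its only neighbor at distance 2. -/
def PrivateN3 {V : Type*} (G : SimpleGraph V) (x y u t : V) : Prop :=
  min (G.dist t x) (G.dist t y) = 3 ∧ G.Adj u t ∧
    ∀ w : V, G.Adj t w → min (G.dist w x) (G.dist w y) = 2 → w = u

theorem stmt_18 {V : Type*} [Fintype V] (G : SimpleGraph V) (M : Set (Sym2 V))
    (hM : IsDIM G M) (x y : V) (hxy : G.Adj x y) (hxyM : s(x, y) ∈ M)
    (hN2indep : ∀ u v : V, min (G.dist u x) (G.dist u y) = 2 →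
      min (G.dist v x) (G.dist v y) = 2 → ¬ G.Adj u v)
    (hmate : ∀ u : V, min (G.dist u x) (G.dist u y) = 2 →
      ∃ w : V, s(u, w) ∈ M ∧ min (G.dist w x) (G.dist w y) = 3)
    (u v : V) (hu : min (G.dist u x) (G.dist u y) = 2)
    (hv : min (G.dist v x) (G.dist v y) = 2) (huv : u ≠ v)
    (t1 t2 t3 s1 s2 s3 : V)
    (ht1 : PrivateN3 G x y u t1) (ht2 : PrivateN3 G x y u t2)
    (ht3 : PrivateN3 G x y u t3)
    (hs1 : PrivateN3 G x y v s1) (hs2 : PrivateN3 G x y v s2)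
    (hs3 : PrivateN3 G x y v s3)
    (ht12 : t1 ≠ t2) (ht13 : t1 ≠ t3) (ht23 : t2 ≠ t3)
    (hs12 : s1 ≠ s2) (hs13 : s1 ≠ s3) (hs23 : s2 ≠ s3)
    (e1 : G.Adj t1 s1) (e2 : G.Adj t2 s2) (e3 : G.Adj t3 s3) :
    False := by
  obtain ⟨hMsub, hMdom⟩ := hM
  obtain ⟨w, hwM, -⟩ := hmate u hu
  obtain ⟨w', hw'M, -⟩ := hmate v hv
  have key : ∀ z wz t : V, s(z, wz) ∈ M → G.Adj z t → ∀ f ∈ M, t ∈ f → t = wz := by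
    intro z wz t hzwM hzt f hfM htf
    have hE : s(z, t) ∈ G.edgeSet := hzt
    obtain ⟨g, ⟨hgM, -⟩, hg_uniq⟩ := hMdom _ hE
    have h1 : f = g := hg_uniq f ⟨hfM, t, by simp, htf⟩
    have h2 : s(z, wz) = g := hg_uniq _ ⟨hzwM, z, by simp, by simp⟩
    have : t ∈ s(z, wz) := by rw [h2, ← h1]; exact htf
    rcases Sym2.mem_iff.mp this with h | h
    · exact absurd h.symm hzt.ne
    · exact h
  have dom : ∀ t s : V, G.Adj u t → G.Adj v s → G.Adj t s → t = w ∨ s = w' := by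
    intro t s hut hvs hts
    obtain ⟨f, ⟨hfM, z, hz1, hz2⟩, -⟩ := hMdom s(t, s) hts
    rcases Sym2.mem_iff.mp hz1 with rfl | rfl
    · exact Or.inl (key u w z hwM hut f hfM hz2)
    · exact Or.inr (key v w' z hw'M hvs f hfM hz2)
  have d1 := dom t1 s1 ht1.2.1 hs1.2.1 e1
  have d2 := dom t2 s2 ht2.2.1 hs2.2.1 e2
  have d3 := dom t3 s3 ht3.2.1 hs3.2.1 e3
  rcases d1 with h1|h1 <;> rcases d2 with h2|h2 <;> rcases d3 with h3|h3 <;>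
    first
    | exact ht12 (h1.trans h2.symm)
    | exact ht13 (h1.trans h3.symm)
    | exact ht23 (h2.trans h3.symm)
    | exact hs12 (h1.trans h2.symm)
    | exact hs13 (h1.trans h3.symm)
    | exact hs23 (h2.trans h3.symm)
end
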